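/- arXiv:1910.01338 — 5 statements merged into one kernel-verified Lean document; each statement's English description precedes it below -/
import Mathlib

section
/- Let a < b be real numbers, P ∈ ℝ^{p×m} a matrix, Q₁ : [a,b] → ℝ^{p×n} and Q₂ : [a,b] → ℝ^{q×m} continuous matrix-valued functions, and R₀ : [a,b] → ℝ^{q×n}, R₁, R₂ : [a,b]×[a,b] → ℝ^{q×n} continuous matrix-valued functions. Then the map sending (x, y) ∈ ℝ^m × L²([a,b], ℝ^n) to (P x + ∫_a^b Q₁(s) y(s) ds, s ↦ Q₂(s) x + N₀-part: R₀(s) y(s) + ∫_a^s R₁(s,θ) y(θ) dθ + ∫_s^b R₂(s,θ) y(θ) dθ) is a well-defined bounded linear operator from ℝ^m × L²([a,b], ℝ^n) to ℝ^p × L²([a,b], ℝ^q). -/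
open MeasureTheory Set

/-- Matrix–vector multiplication, viewed as a map between Euclidean spaces. -/
def mulVecE {n m : ℕ} (M : Matrix (Fin n) (Fin m) ℝ) (v : EuclideanSpace ℝ (Fin m)) :
    EuclideanSpace ℝ (Fin n) := WithLp.toLp 2 (M.mulVec v)

/-- The 3-PI operator `P_{N₀,N₁,N₂}`, applied pointwise. -/
noncomputable def threePI {n m : ℕ} (a b : ℝ)
    (N₀ : ℝ → Matrix (Fin n) (Fin m) ℝ)
    (N₁ N₂ : ℝ → ℝ → Matrix (Fin n) (Fin m) ℝ)
    (y : ℝ → EuclideanSpace ℝ (Fin m)) (s : ℝ) : EuclideanSpace ℝ (Fin n) :=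
  mulVecE (N₀ s) (y s) + (∫ θ in a..s, mulVecE (N₁ s θ) (y θ))
    + ∫ θ in s..b, mulVecE (N₂ s θ) (y θ)

/-- Finite-dimensional component of the 4-PI operator `Π[P,Q₁,Q₂,R₀,R₁,R₂]`. -/
noncomputable def fourPIfin {p n m : ℕ} (a b : ℝ)
    (P : Matrix (Fin p) (Fin m) ℝ) (Q₁ : ℝ → Matrix (Fin p) (Fin n) ℝ)
    (x : EuclideanSpace ℝ (Fin m)) (y : ℝ → EuclideanSpace ℝ (Fin n)) :
    EuclideanSpace ℝ (Fin p) :=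
  mulVecE P x + ∫ s in a..b, mulVecE (Q₁ s) (y s)

/-- Function-valued component of the 4-PI operator `Π[P,Q₁,Q₂,R₀,R₁,R₂]`. -/
noncomputable def fourPIfun {q n m : ℕ} (a b : ℝ)
    (Q₂ : ℝ → Matrix (Fin q) (Fin m) ℝ)
    (R₀ : ℝ → Matrix (Fin q) (Fin n) ℝ) (R₁ R₂ : ℝ → ℝ → Matrix (Fin q) (Fin n) ℝ)
    (x : EuclideanSpace ℝ (Fin m)) (y : ℝ → EuclideanSpace ℝ (Fin n)) (s : ℝ) :
    EuclideanSpace ℝ (Fin q) :=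
  mulVecE (Q₂ s) x + threePI a b R₀ R₁ R₂ y s

open scoped ENNReal NNReal

/-! Each block of the 4-PI operator is bounded on its own. By compactness of `[a,b]` all matrix
parameters are uniformly bounded. A uniformly bounded multiplier `s ↦ R₀(s)` is bounded on `L²`.
For the integral terms, `|∫ K(s,θ) y(θ) dθ| ≤ C ‖y‖_{L¹} ≤ C √(b - a) ‖y‖_{L²}` (Hölder on a
finite measure space), which bounds both the functional `y ↦ ∫ Q₁ y` and the two Volterra parts
of the 3-PI operator, the latter viewed as integral operators whose kernels are `R₁`, `R₂` cut
off to the triangles `θ ≤ s` and `s < θ`. -/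

theorem LinearMap.exists_clm_of_enorm_le {X Y : Type*} [SeminormedAddCommGroup X]
    [NormedSpace ℝ X] [SeminormedAddCommGroup Y] [NormedSpace ℝ Y] (f : X →ₗ[ℝ] Y)
    {C : ℝ≥0∞} (hC : C ≠ ∞) (hf : ∀ x, ‖f x‖ₑ ≤ C * ‖x‖ₑ) :
    ∃ T : X →L[ℝ] Y, ∀ x, T x = f x := by
  refine ⟨f.mkContinuous C.toReal fun x => ?_, fun _ => rfl⟩
  rw [← toReal_enorm (f x), ← toReal_enorm x, ← ENNReal.toReal_mul]
  exact ENNReal.toReal_mono (ENNReal.mul_ne_top hC enorm_ne_top) (hf x)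

namespace MeasureTheory

variable {α β E F X : Type*} [MeasurableSpace α] [MeasurableSpace β] {μ : Measure α}
  {ν : Measure β} [NormedAddCommGroup E] [NormedSpace ℝ E] [NormedAddCommGroup F]
  [NormedSpace ℝ F] [SeminormedAddCommGroup X] [NormedSpace ℝ X] {p r : ℝ≥0∞}

theorem exists_clm_Lp_of_ae_linear [Fact (1 ≤ p)] (f : X → α → F)
    (hf : ∀ x, AEStronglyMeasurable (f x) μ) (hadd : ∀ x x', f (x + x') =ᵐ[μ] f x + f x')
    (hsmul : ∀ (c : ℝ) x, f (c • x) =ᵐ[μ] c • f x) {C : ℝ≥0∞} (hC : C ≠ ∞)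
    (hbound : ∀ x, eLpNorm (f x) p μ ≤ C * ‖x‖ₑ) :
    ∃ T : X →L[ℝ] Lp F p μ, ∀ x, T x =ᵐ[μ] f x := by
  have hmem (x : X) : MemLp (f x) p μ :=
    ⟨hf x, (hbound x).trans_lt (ENNReal.mul_lt_top hC.lt_top enorm_lt_top)⟩
  let g : X →ₗ[ℝ] Lp F p μ :=
    { toFun := fun x => (hmem x).toLp
      map_add' := fun x x' => by
        rw [← MemLp.toLp_add]; exact MemLp.toLp_congr _ _ (hadd x x')
      map_smul' := fun c x => by
        rw [RingHom.id_apply, ← MemLp.toLp_const_smul]; exact MemLp.toLp_congr _ _ (hsmul c x) }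
  obtain ⟨T, hT⟩ := g.exists_clm_of_enorm_le hC fun x => by
    simpa [g, Lp.enorm_toLp] using hbound x
  exact ⟨T, fun x => (hT x).symm ▸ (hmem x).coeFn_toLp⟩

variable {Φ : α → E →L[ℝ] F} {C : ℝ≥0}

theorem integrable_clm_apply [IsFiniteMeasure μ] [Fact (1 ≤ p)] (hΦ : AEStronglyMeasurable Φ μ)
    (hΦC : ∀ᵐ x ∂μ, ‖Φ x‖ₑ ≤ C) {g : α → E} (hg : MemLp g p μ) :
    Integrable (fun x => Φ x (g x)) μ := by
  refine ((hg.integrable Fact.out).norm.const_mul C).mono'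
    ((ContinuousLinearMap.id ℝ _).aestronglyMeasurable_comp₂ hΦ hg.1) ?_
  filter_upwards [hΦC] with x hx
  exact ((Φ x).le_opNorm _).trans (by gcongr; exact_mod_cast enorm_le_coe.1 hx)

theorem enorm_integral_clm_apply_le (hp : 1 ≤ p) (hΦC : ∀ᵐ x ∂μ, ‖Φ x‖ₑ ≤ C) {g : α → E}
    (hg : AEStronglyMeasurable g μ) :
    ‖∫ x, Φ x (g x) ∂μ‖ₑ ≤ C * μ univ ^ (1 - 1 / p.toReal) * eLpNorm g p μ :=
  calc ‖∫ x, Φ x (g x) ∂μ‖ₑ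
      ≤ ∫⁻ x, ‖Φ x (g x)‖ₑ ∂μ := enorm_integral_le_lintegral_enorm _
    _ ≤ ∫⁻ x, C * ‖g x‖ₑ ∂μ := lintegral_mono_ae <| hΦC.mono fun x hx =>
        ((Φ x).le_opENorm _).trans (by gcongr)
    _ = C * eLpNorm g 1 μ := by rw [lintegral_const_mul' _ _ ENNReal.coe_ne_top,
        eLpNorm_one_eq_lintegral_enorm]
    _ ≤ C * (eLpNorm g p μ * μ univ ^ (1 / (1 : ℝ≥0∞).toReal - 1 / p.toReal)) := by
        gcongr; exact eLpNorm_le_eLpNorm_mul_rpow_measure_univ hp hg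
    _ = C * μ univ ^ (1 - 1 / p.toReal) * eLpNorm g p μ := by
        rw [ENNReal.toReal_one, div_one, mul_comm (eLpNorm g p μ), mul_assoc]

theorem measure_univ_rpow_one_sub_ne_top [IsFiniteMeasure μ] (hp : 1 ≤ p) :
    μ univ ^ (1 - 1 / p.toReal) ≠ ∞ := by
  have hexp : 1 / p.toReal ≤ 1 := by
    rw [one_div, ← ENNReal.toReal_inv]
    exact ENNReal.toReal_le_of_le_ofReal zero_le_one (by simpa using ENNReal.inv_le_one.2 hp)
  exact ENNReal.rpow_ne_top_of_nonneg (sub_nonneg.2 hexp) (measure_ne_top μ univ)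

theorem exists_clm_integral_clm_apply [IsFiniteMeasure μ] [Fact (1 ≤ p)]
    (hΦ : AEStronglyMeasurable Φ μ) (hΦC : ∀ᵐ x ∂μ, ‖Φ x‖ₑ ≤ C) :
    ∃ T : Lp E p μ →L[ℝ] F, ∀ y, T y = ∫ x, Φ x (y x) ∂μ := by
  let f : Lp E p μ →ₗ[ℝ] F :=
    { toFun := fun y => ∫ x, Φ x (y x) ∂μ
      map_add' := fun y y' => by
        rw [← integral_add (integrable_clm_apply hΦ hΦC (Lp.memLp y))
          (integrable_clm_apply hΦ hΦC (Lp.memLp y'))]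
        refine integral_congr_ae ?_
        filter_upwards [Lp.coeFn_add y y'] with x hx
        rw [hx, Pi.add_apply, map_add]
      map_smul' := fun c y => by
        rw [RingHom.id_apply, ← integral_smul]
        refine integral_congr_ae ?_
        filter_upwards [Lp.coeFn_smul c y] with x hx
        rw [hx, Pi.smul_apply, map_smul] }
  exact f.exists_clm_of_enorm_le
    (ENNReal.mul_ne_top ENNReal.coe_ne_top (measure_univ_rpow_one_sub_ne_top Fact.out))
    fun y => (enorm_integral_clm_apply_le Fact.out hΦC (Lp.aestronglyMeasurable y)).trans_eq
      (by rw [Lp.enorm_def])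

theorem exists_clm_Lp_clm_apply [Fact (1 ≤ p)] (hΦ : AEStronglyMeasurable Φ μ)
    (hΦC : ∀ᵐ x ∂μ, ‖Φ x‖ₑ ≤ C) :
    ∃ T : Lp E p μ →L[ℝ] Lp F p μ, ∀ y, T y =ᵐ[μ] fun x => Φ x (y x) := by
  refine exists_clm_Lp_of_ae_linear _
    (fun y => (ContinuousLinearMap.id ℝ _).aestronglyMeasurable_comp₂ hΦ
      (Lp.aestronglyMeasurable y))
    (fun y y' => ?_) (fun c y => ?_) (C := C) ENNReal.coe_ne_top fun y => ?_
  · filter_upwards [Lp.coeFn_add y y'] with x hx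
    rw [hx, Pi.add_apply, map_add, Pi.add_apply]
  · filter_upwards [Lp.coeFn_smul c y] with x hx
    rw [hx, Pi.smul_apply, map_smul, Pi.smul_apply]
  · rw [Lp.enorm_def]
    exact eLpNorm_le_nnreal_smul_eLpNorm_of_ae_le_mul'
      (hΦC.mono fun x hx => ((Φ x).le_opENorm _).trans (by gcongr)) p

theorem exists_clm_Lp_clm_apply_const [IsFiniteMeasure μ] [Fact (1 ≤ p)]
    (hΦ : AEStronglyMeasurable Φ μ) (hΦC : ∀ᵐ x ∂μ, ‖Φ x‖ₑ ≤ C) :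
    ∃ T : E →L[ℝ] Lp F p μ, ∀ v, T v =ᵐ[μ] fun x => Φ x v := by
  refine exists_clm_Lp_of_ae_linear _ hΦ.apply_continuousLinearMap (fun v v' => ?_)
    (fun c v => ?_) (C := C * μ univ ^ p.toReal⁻¹) ?_ fun v => ?_
  · exact Filter.Eventually.of_forall fun x => map_add _ _ _
  · exact Filter.Eventually.of_forall fun x => map_smul _ _ _
  · exact ENNReal.mul_ne_top ENNReal.coe_ne_top
      (ENNReal.rpow_ne_top_of_nonneg (by positivity) (measure_ne_top μ univ))
  · refine (eLpNorm_le_of_ae_enorm_bound (C := C * ‖v‖ₑ)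
      (hΦC.mono fun x hx => ((Φ x).le_opENorm _).trans (by gcongr))).trans_eq ?_
    rw [smul_eq_mul]; ring

theorem exists_clm_Lp_integral_kernel [IsFiniteMeasure μ] [IsFiniteMeasure ν] [Fact (1 ≤ p)]
    [Fact (1 ≤ r)] {K : α × β → E →L[ℝ] F} (hK : AEStronglyMeasurable K (μ.prod ν))
    (hKC : ∀ᵐ z ∂μ.prod ν, ‖K z‖ₑ ≤ C) :
    ∃ T : Lp E p ν →L[ℝ] Lp F r μ, ∀ y, T y =ᵐ[μ] fun s => ∫ θ, K (s, θ) (y θ) ∂ν := by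
  have hslice : ∀ᵐ s ∂μ,
      AEStronglyMeasurable (fun θ => K (s, θ)) ν ∧ ∀ᵐ θ ∂ν, ‖K (s, θ)‖ₑ ≤ C :=
    hK.prodMk_left.and (Measure.ae_ae_of_ae_prod hKC)
  have hint (y : Lp E p ν) : ∀ᵐ s ∂μ, Integrable (fun θ => K (s, θ) (y θ)) ν :=
    hslice.mono fun s hs => integrable_clm_apply hs.1 hs.2 (Lp.memLp y)
  refine exists_clm_Lp_of_ae_linear _ (fun y => ?_) (fun y y' => ?_) (fun c y => ?_)
    (C := C * ν univ ^ (1 - 1 / p.toReal) * μ univ ^ r.toReal⁻¹) ?_ (fun y => ?_)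
  · exact ((ContinuousLinearMap.id ℝ _).aestronglyMeasurable_comp₂ hK
      ((Lp.aestronglyMeasurable y).comp_quasiMeasurePreserving
        Measure.quasiMeasurePreserving_snd)).integral_prod_right'
  · filter_upwards [hint y, hint y'] with s hy hy'
    rw [Pi.add_apply, ← integral_add hy hy']
    refine integral_congr_ae ?_
    filter_upwards [Lp.coeFn_add y y'] with θ hθ
    rw [hθ, Pi.add_apply, map_add]
  · refine Filter.Eventually.of_forall fun s => ?_
    rw [Pi.smul_apply, ← integral_smul]
    refine integral_congr_ae ?_
    filter_upwards [Lp.coeFn_smul c y] with θ hθ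
    rw [hθ, Pi.smul_apply, map_smul]
  · exact ENNReal.mul_ne_top
      (ENNReal.mul_ne_top ENNReal.coe_ne_top (measure_univ_rpow_one_sub_ne_top Fact.out))
      (ENNReal.rpow_ne_top_of_nonneg (by positivity) (measure_ne_top μ univ))
  · refine (eLpNorm_le_of_ae_enorm_bound (hslice.mono fun s hs =>
      enorm_integral_clm_apply_le (p := p) Fact.out hs.2 (Lp.aestronglyMeasurable y))).trans_eq ?_
    rw [smul_eq_mul, Lp.enorm_def]; ring

end MeasureTheory

section
variable {E : Type*} [NormedAddCommGroup E] [NormedSpace ℝ E] {a b s : ℝ}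

theorem setIntegral_Iic_restrict_Icc (hs : s ∈ Icc a b) (f : ℝ → E) :
    ∫ θ in Iic s, f θ ∂volume.restrict (Icc a b) = ∫ θ in a..s, f θ := by
  have hset : Iic s ∩ Icc a b = Icc a s := by
    ext θ; simp only [mem_inter_iff, mem_Iic, mem_Icc]; grind
  rw [Measure.restrict_restrict measurableSet_Iic, hset, integral_Icc_eq_integral_Ioc,
    intervalIntegral.integral_of_le hs.1]

theorem setIntegral_Ioi_restrict_Icc (hs : s ∈ Icc a b) (f : ℝ → E) :
    ∫ θ in Ioi s, f θ ∂volume.restrict (Icc a b) = ∫ θ in s..b, f θ := by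
  have hset : Ioi s ∩ Icc a b = Ioc s b := by
    ext θ; simp only [mem_inter_iff, mem_Ioi, mem_Icc, mem_Ioc]; grind
  rw [Measure.restrict_restrict measurableSet_Ioi, hset, intervalIntegral.integral_of_le hs.2]

end

theorem IsCompact.exists_ae_restrict_enorm_le {X G : Type*} [TopologicalSpace X]
    [MeasurableSpace X] [NormedAddCommGroup G] {μ : Measure X} {s : Set X} {f : X → G}
    (hs : IsCompact s) (hms : MeasurableSet s) (hf : ContinuousOn f s) :
    ∃ C : ℝ≥0, ∀ᵐ x ∂μ.restrict s, ‖f x‖ₑ ≤ C := by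
  obtain ⟨C, hC⟩ := hs.exists_bound_of_continuousOn hf
  refine ⟨C.toNNReal, (ae_restrict_mem hms).mono fun x hx => ?_⟩
  rw [enorm_le_coe, ← NNReal.coe_le_coe, coe_nnnorm]
  exact (hC x hx).trans (Real.le_coe_toNNReal C)

noncomputable def mulVecCLM (k l : ℕ) :
    Matrix (Fin k) (Fin l) ℝ →ₗ[ℝ] EuclideanSpace ℝ (Fin l) →L[ℝ] EuclideanSpace ℝ (Fin k) :=
  LinearMap.toContinuousLinearMap.toLinearMap ∘ₗ Matrix.toEuclideanLin.toLinearMap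

theorem mulVecCLM_apply {k l : ℕ} (M : Matrix (Fin k) (Fin l) ℝ) (v : EuclideanSpace ℝ (Fin l)) :
    mulVecCLM k l M v = mulVecE M v := rfl

theorem ContinuousOn.mulVecCLM {X : Type*} [TopologicalSpace X] {k l : ℕ}
    {Q : X → Matrix (Fin k) (Fin l) ℝ} {s : Set X} (hQ : ContinuousOn Q s) :
    ContinuousOn (fun x => _root_.mulVecCLM k l (Q x)) s :=
  (_root_.mulVecCLM k l).continuous_of_finiteDimensional.comp_continuousOn hQ

section PIOperators

variable {p q n m : ℕ} {a b : ℝ}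

theorem exists_clm_fourPIfin (hab : a ≤ b) (P : Matrix (Fin p) (Fin m) ℝ)
    (Q₁ : ℝ → Matrix (Fin p) (Fin n) ℝ) (hQ₁ : ContinuousOn Q₁ (Icc a b)) :
    ∃ T : EuclideanSpace ℝ (Fin m) × Lp (EuclideanSpace ℝ (Fin n)) 2 (volume.restrict (Icc a b))
        →L[ℝ] EuclideanSpace ℝ (Fin p),
      ∀ x y, T (x, y) = fourPIfin a b P Q₁ x y := by
  obtain ⟨C, hC⟩ :=
    isCompact_Icc.exists_ae_restrict_enorm_le (μ := volume) measurableSet_Icc hQ₁.mulVecCLM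
  obtain ⟨A, hA⟩ :=
    exists_clm_integral_clm_apply (p := 2) (hQ₁.mulVecCLM.aestronglyMeasurable measurableSet_Icc) hC
  refine ⟨(mulVecCLM p m P).comp (.fst ℝ _ _) + A.comp (.snd ℝ _ _), fun x y => ?_⟩
  rw [fourPIfin, intervalIntegral.integral_of_le hab, ← integral_Icc_eq_integral_Ioc]
  exact congrArg₂ (· + ·) rfl (hA y)

theorem exists_clm_Lp_setIntegral_kernel {S : Set (ℝ × ℝ)} (hS : MeasurableSet S)
    (R : ℝ → ℝ → Matrix (Fin q) (Fin n) ℝ)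
    (hR : ContinuousOn (fun z : ℝ × ℝ => R z.1 z.2) (Icc a b ×ˢ Icc a b)) :
    ∃ T : Lp (EuclideanSpace ℝ (Fin n)) 2 (volume.restrict (Icc a b)) →L[ℝ]
        Lp (EuclideanSpace ℝ (Fin q)) 2 (volume.restrict (Icc a b)),
      ∀ y, T y =ᵐ[volume.restrict (Icc a b)]
        fun s => ∫ θ in Prod.mk s ⁻¹' S, mulVecE (R s θ) (y θ) ∂volume.restrict (Icc a b) := by
  obtain ⟨C, hC⟩ := (isCompact_Icc.prod isCompact_Icc).exists_ae_restrict_enorm_le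
    (μ := volume) (measurableSet_Icc.prod measurableSet_Icc) hR.mulVecCLM
  have hK := (hR.mulVecCLM.aestronglyMeasurable (μ := volume)
    (measurableSet_Icc.prod measurableSet_Icc)).indicator hS
  rw [Measure.volume_eq_prod, ← Measure.prod_restrict] at hK hC
  obtain ⟨T, hT⟩ := exists_clm_Lp_integral_kernel (p := 2) (r := 2) (C := C) hK
    (hC.mono fun z hz => by by_cases h : z ∈ S <;> simp [h, hz])
  refine ⟨T, fun y => (hT y).mono fun s hs => hs.trans ?_⟩
  dsimp only
  rw [← integral_indicator (measurable_prodMk_left hS)]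
  congr 1 with θ
  by_cases h : (s, θ) ∈ S <;> simp [h, mulVecCLM_apply]

theorem exists_clm_threePI (R₀ : ℝ → Matrix (Fin q) (Fin n) ℝ)
    (R₁ R₂ : ℝ → ℝ → Matrix (Fin q) (Fin n) ℝ) (hR₀ : ContinuousOn R₀ (Icc a b))
    (hR₁ : ContinuousOn (fun z : ℝ × ℝ => R₁ z.1 z.2) (Icc a b ×ˢ Icc a b))
    (hR₂ : ContinuousOn (fun z : ℝ × ℝ => R₂ z.1 z.2) (Icc a b ×ˢ Icc a b)) :
    ∃ T : Lp (EuclideanSpace ℝ (Fin n)) 2 (volume.restrict (Icc a b)) →L[ℝ]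
        Lp (EuclideanSpace ℝ (Fin q)) 2 (volume.restrict (Icc a b)),
      ∀ y, T y =ᵐ[volume.restrict (Icc a b)] threePI a b R₀ R₁ R₂ y := by
  obtain ⟨C, hC⟩ :=
    isCompact_Icc.exists_ae_restrict_enorm_le (μ := volume) measurableSet_Icc hR₀.mulVecCLM
  obtain ⟨M, hM⟩ :=
    exists_clm_Lp_clm_apply (p := 2) (hR₀.mulVecCLM.aestronglyMeasurable measurableSet_Icc) hC
  obtain ⟨V₁, hV₁⟩ :=
    exists_clm_Lp_setIntegral_kernel (measurableSet_le measurable_snd measurable_fst) R₁ hR₁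
  obtain ⟨V₂, hV₂⟩ :=
    exists_clm_Lp_setIntegral_kernel (measurableSet_lt measurable_fst measurable_snd) R₂ hR₂
  refine ⟨M + V₁ + V₂, fun y => ?_⟩
  filter_upwards [Lp.coeFn_add (M y + V₁ y) (V₂ y), Lp.coeFn_add (M y) (V₁ y), hM y, hV₁ y,
    hV₂ y, ae_restrict_mem measurableSet_Icc] with s hsum hsum' hMs hV₁s hV₂s hs
  rw [add_apply, add_apply, hsum, Pi.add_apply, hsum',
    Pi.add_apply, hMs, hV₁s, hV₂s, threePI, ← setIntegral_Iic_restrict_Icc hs,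
    ← setIntegral_Ioi_restrict_Icc hs]
  rfl

theorem exists_clm_fourPIfun (Q₂ : ℝ → Matrix (Fin q) (Fin m) ℝ)
    (R₀ : ℝ → Matrix (Fin q) (Fin n) ℝ) (R₁ R₂ : ℝ → ℝ → Matrix (Fin q) (Fin n) ℝ)
    (hQ₂ : ContinuousOn Q₂ (Icc a b)) (hR₀ : ContinuousOn R₀ (Icc a b))
    (hR₁ : ContinuousOn (fun z : ℝ × ℝ => R₁ z.1 z.2) (Icc a b ×ˢ Icc a b))
    (hR₂ : ContinuousOn (fun z : ℝ × ℝ => R₂ z.1 z.2) (Icc a b ×ˢ Icc a b)) :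
    ∃ T : EuclideanSpace ℝ (Fin m) × Lp (EuclideanSpace ℝ (Fin n)) 2 (volume.restrict (Icc a b))
        →L[ℝ] Lp (EuclideanSpace ℝ (Fin q)) 2 (volume.restrict (Icc a b)),
      ∀ x y, T (x, y) =ᵐ[volume.restrict (Icc a b)] fourPIfun a b Q₂ R₀ R₁ R₂ x y := by
  obtain ⟨C, hC⟩ :=
    isCompact_Icc.exists_ae_restrict_enorm_le (μ := volume) measurableSet_Icc hQ₂.mulVecCLM
  obtain ⟨B, hB⟩ := exists_clm_Lp_clm_apply_const (p := 2)
    (hQ₂.mulVecCLM.aestronglyMeasurable measurableSet_Icc) hC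
  obtain ⟨Θ, hΘ⟩ := exists_clm_threePI R₀ R₁ R₂ hR₀ hR₁ hR₂
  refine ⟨B.comp (.fst ℝ _ _) + Θ.comp (.snd ℝ _ _), fun x y => ?_⟩
  filter_upwards [Lp.coeFn_add (B x) (Θ y), hB x, hΘ y] with s hsum hBs hΘs
  exact hsum.trans (congrArg₂ (· + ·) hBs hΘs)

end PIOperators

/-- A 4-PI operator with continuous matrix-valued parameters is a well-defined bounded
linear operator from `ℝ^m × L²([a,b], ℝ^n)` to `ℝ^p × L²([a,b], ℝ^q)`, where the product
spaces carry the `ℝ × L²` (Hilbert) norm, i.e. the `WithLp 2` product norm. -/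
theorem fourPI_bounded {p q n m : ℕ} {a b : ℝ} (hab : a < b)
    (P : Matrix (Fin p) (Fin m) ℝ)
    (Q₁ : ℝ → Matrix (Fin p) (Fin n) ℝ)
    (Q₂ : ℝ → Matrix (Fin q) (Fin m) ℝ)
    (R₀ : ℝ → Matrix (Fin q) (Fin n) ℝ)
    (R₁ R₂ : ℝ → ℝ → Matrix (Fin q) (Fin n) ℝ)
    (hQ₁ : ContinuousOn Q₁ (Icc a b))
    (hQ₂ : ContinuousOn Q₂ (Icc a b))
    (hR₀ : ContinuousOn R₀ (Icc a b))
    (hR₁ : ContinuousOn (fun z : ℝ × ℝ => R₁ z.1 z.2) (Icc a b ×ˢ Icc a b))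
    (hR₂ : ContinuousOn (fun z : ℝ × ℝ => R₂ z.1 z.2) (Icc a b ×ˢ Icc a b)) :
    ∃ T : WithLp 2 (EuclideanSpace ℝ (Fin m) ×
            Lp (EuclideanSpace ℝ (Fin n)) 2 (volume.restrict (Icc a b))) →L[ℝ]
          WithLp 2 (EuclideanSpace ℝ (Fin p) ×
            Lp (EuclideanSpace ℝ (Fin q)) 2 (volume.restrict (Icc a b))),
      ∀ x y,
        (WithLp.equiv 2 _ (T ((WithLp.equiv 2 _).symm (x, y)))).1
            = fourPIfin a b P Q₁ x (⇑y) ∧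
        ∀ᵐ s ∂(volume.restrict (Icc a b)),
          (WithLp.equiv 2 _ (T ((WithLp.equiv 2 _).symm (x, y)))).2 s
            = fourPIfun a b Q₂ R₀ R₁ R₂ x (⇑y) s := by
  obtain ⟨F, hF⟩ := exists_clm_fourPIfin hab.le P Q₁ hQ₁
  obtain ⟨G, hG⟩ := exists_clm_fourPIfun Q₂ R₀ R₁ R₂ hQ₂ hR₀ hR₁ hR₂
  exact ⟨(WithLp.prodContinuousLinearEquiv 2 ℝ _ _).symm.toContinuousLinearMap ∘L F.prod G ∘L
    (WithLp.prodContinuousLinearEquiv 2 ℝ _ _).toContinuousLinearMap, fun x y => ⟨hF x y, hG x y⟩⟩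
end

section
/- Let a < b, let P ∈ ℝ^{p×m}, let Q₁ : [a,b] → ℝ^{p×n}, Q₂ : [a,b] → ℝ^{q×m} be continuous, and let R₀ : [a,b] → ℝ^{q×n}, R₁, R₂ : [a,b]² → ℝ^{q×n} be continuous. Then for all (x₁, y₁) ∈ ℝ^m × L²([a,b], ℝ^n) and (x₂, y₂) ∈ ℝ^p × L²([a,b], ℝ^q), ⟨Π[P,Q₁,Q₂,R₀,R₁,R₂](x₁,y₁), (x₂,y₂)⟩ = ⟨(x₁,y₁), Π[P̂,Q̂₁,Q̂₂,R̂₀,R̂₁,R̂₂](x₂,y₂)⟩, where P̂ = Pᵀ, Q̂₁(s) = Q₂(s)ᵀ, Q̂₂(s) = Q₁(s)ᵀ, R̂₀(s) = R₀(s)ᵀ, R̂₁(s,η) = R₂(η,s)ᵀ and R̂₂(s,η) = R₁(η,s)ᵀ. That is, the adjoint of a 4-PI operator with respect to the ℝ × L² inner product is again a 4-PI operator with these parameters. -/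
open MeasureTheory Set Matrix
open scoped RealInnerProductSpace

/-!
Pairing both sides with `(x₂, y₂)` splits the claim into scalar identities. The multiplier
terms (`P`, `Q₁`, `Q₂`, `R₀`) only need `⟪M v, w⟫ = ⟪v, Mᵀ w⟫` pointwise. The two Volterra
terms need Fubini on the triangle `{θ ≤ s}` of `[a, b]²`, which turns `∫_a^b ∫_a^s` into
`∫_a^b ∫_θ^b`; the term with `R₂` is the one with `R₁` for the kernel `(s, θ) ↦ R₂(θ, s)ᵀ`,
read backwards. Continuity bounds every kernel on the compact square, so the integrands are
dominated by `C ‖y₁ θ‖ ‖y₂ s‖`, which is integrable since `L² ⊆ L¹` on `[a, b]`.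
-/

section MatrixVector

variable {n m : ℕ}

lemma inner_mulVecE_transpose (M : Matrix (Fin n) (Fin m) ℝ) (v : EuclideanSpace ℝ (Fin m))
    (w : EuclideanSpace ℝ (Fin n)) : ⟪mulVecE Mᵀ w, v⟫ = ⟪mulVecE M v, w⟫ := by
  simp only [PiLp.inner_apply, RCLike.inner_apply, conj_trivial, mulVecE, Matrix.mulVec,
    dotProduct, Matrix.transpose_apply, Finset.mul_sum]
  rw [Finset.sum_comm]
  exact Finset.sum_congr rfl fun i _ => Finset.sum_congr rfl fun j _ => by ring

lemma continuous_mulVecE :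
    Continuous fun p : Matrix (Fin n) (Fin m) ℝ × EuclideanSpace ℝ (Fin m) => mulVecE p.1 p.2 :=
  (PiLp.continuous_toLp 2 _).comp
    (continuous_fst.matrix_mulVec ((PiLp.continuous_ofLp 2 _).comp continuous_snd))

lemma exists_norm_mulVecE_le {α : Type*} [TopologicalSpace α] {t : Set α} (ht : IsCompact t)
    {A : α → Matrix (Fin n) (Fin m) ℝ} (hA : ContinuousOn A t) :
    ∃ C, ∀ s ∈ t, ∀ v, ‖mulVecE (A s) v‖ ≤ C * ‖v‖ :=
  open scoped Matrix.Norms.L2Operator in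
  let ⟨C, hC⟩ := ht.exists_bound_of_continuousOn hA
  ⟨C, fun s hs v => ((A s).l2_opNorm_mulVec v).trans
    (mul_le_mul_of_nonneg_right (hC s hs) (norm_nonneg v))⟩

lemma ContinuousOn.matrix_transpose {α : Type*} [TopologicalSpace α] {t : Set α}
    {A : α → Matrix (Fin n) (Fin m) ℝ} (hA : ContinuousOn A t) :
    ContinuousOn (fun s => (A s)ᵀ) t :=
  continuous_id.matrix_transpose.comp_continuousOn hA

lemma ContinuousOn.transpose_swap {K : ℝ → ℝ → Matrix (Fin n) (Fin m) ℝ} {s t : Set ℝ}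
    (hK : ContinuousOn (Function.uncurry K) (s ×ˢ t)) :
    ContinuousOn (Function.uncurry fun s θ => (K θ s)ᵀ) (t ×ˢ s) :=
  (hK.comp continuous_swap.continuousOn fun _ hz => ⟨hz.2, hz.1⟩).matrix_transpose

-- Not found through the `Matrix` type synonym; `ContinuousOn.aestronglyMeasurable` needs it.
instance {ι κ : Type*} [Countable ι] [Countable κ] :
    TopologicalSpace.PseudoMetrizableSpace (Matrix ι κ ℝ) :=
  inferInstanceAs (TopologicalSpace.PseudoMetrizableSpace (ι → κ → ℝ))

lemma MeasureTheory.AEStronglyMeasurable.mulVecE {α : Type*} [MeasurableSpace α] {μ : Measure α}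
    {A : α → Matrix (Fin n) (Fin m) ℝ} {y : α → EuclideanSpace ℝ (Fin m)}
    (hA : AEStronglyMeasurable A μ) (hy : AEStronglyMeasurable y μ) :
    AEStronglyMeasurable (fun s => mulVecE (A s) (y s)) μ :=
  continuous_mulVecE.comp_aestronglyMeasurable (hA.prodMk hy)

variable {α : Type*} [TopologicalSpace α] [T2Space α] [MeasurableSpace α] [OpensMeasurableSpace α]
  [SecondCountableTopology α] {μ : Measure α} {t : Set α} {A : α → Matrix (Fin n) (Fin m) ℝ}
  {y : α → EuclideanSpace ℝ (Fin m)}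

lemma MeasureTheory.MemLp.mulVecE_of_continuousOn {p : ENNReal} (ht : IsCompact t)
    (hA : ContinuousOn A t) (hy : MemLp y p (μ.restrict t)) :
    MemLp (fun s => mulVecE (A s) (y s)) p (μ.restrict t) := by
  obtain ⟨C, hC⟩ := exists_norm_mulVecE_le ht hA
  refine hy.of_le_mul (c := C) ((hA.aestronglyMeasurable ht.measurableSet).mulVecE hy.1) ?_
  filter_upwards [ae_restrict_mem ht.measurableSet] with s hs using hC s hs (y s)

lemma MeasureTheory.IntegrableOn.mulVecE_of_continuousOn (ht : IsCompact t)
    (hA : ContinuousOn A t) (hy : IntegrableOn y t μ) :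
    IntegrableOn (fun s => mulVecE (A s) (y s)) t μ :=
  memLp_one_iff_integrable.mp ((memLp_one_iff_integrable.mpr hy).mulVecE_of_continuousOn ht hA)

end MatrixVector

lemma inner_intervalIntegral_left {E : Type*} [NormedAddCommGroup E] [InnerProductSpace ℝ E]
    [CompleteSpace E] {μ : Measure ℝ} {u v : ℝ} {F : ℝ → E} (hF : IntervalIntegrable F μ u v)
    (w : E) : ⟪∫ x in u..v, F x ∂μ, w⟫ = ∫ x in u..v, ⟪F x, w⟫ ∂μ := by
  simp_rw [real_inner_comm w]
  exact ((innerSL ℝ w).intervalIntegral_comp_comm hF).symm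

lemma inner_intervalIntegral_mulVecE {n m : ℕ} {a b u v : ℝ}
    {A : ℝ → Matrix (Fin n) (Fin m) ℝ} {y : ℝ → EuclideanSpace ℝ (Fin m)}
    (hA : ContinuousOn A (Icc a b)) (hy : IntegrableOn y (Icc a b)) (hu : u ∈ Icc a b)
    (hv : v ∈ Icc a b) (w : EuclideanSpace ℝ (Fin n)) :
    ⟪∫ θ in u..v, mulVecE (A θ) (y θ), w⟫ = ∫ θ in u..v, ⟪mulVecE (A θ) (y θ), w⟫ :=
  inner_intervalIntegral_left
    (((hy.mulVecE_of_continuousOn isCompact_Icc hA).mono_set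
      (uIcc_subset_Icc hu hv)).intervalIntegrable) w

section Triangle

variable {E : Type*} [NormedAddCommGroup E] [NormedSpace ℝ E] {a b : ℝ} {f : ℝ → ℝ → E}

lemma setIntegral_Icc_triangle_indicator_fst {s : ℝ} (hs : s ∈ Icc a b) :
    ∫ θ in Icc a b, {z : ℝ × ℝ | z.2 ≤ z.1}.indicator (Function.uncurry f) (s, θ)
      = ∫ θ in a..s, f s θ := by
  have hrow : (fun θ => {z : ℝ × ℝ | z.2 ≤ z.1}.indicator (Function.uncurry f) (s, θ))
      = (Iic s).indicator (f s) := by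
    ext θ; simp [indicator_apply]
  rw [hrow, integral_indicator measurableSet_Iic, Measure.restrict_restrict measurableSet_Iic,
    show Iic s ∩ Icc a b = Icc a s by ext; simp only [mem_inter_iff, mem_Iic, mem_Icc]; grind,
    intervalIntegral.integral_of_le hs.1, integral_Icc_eq_integral_Ioc]

lemma setIntegral_Icc_triangle_indicator_snd {θ : ℝ} (hθ : θ ∈ Icc a b) :
    ∫ s in Icc a b, {z : ℝ × ℝ | z.2 ≤ z.1}.indicator (Function.uncurry f) (s, θ)
      = ∫ s in θ..b, f s θ := by
  have hcol : (fun s => {z : ℝ × ℝ | z.2 ≤ z.1}.indicator (Function.uncurry f) (s, θ))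
      = (Ici θ).indicator (f · θ) := by
    ext s; simp [indicator_apply]
  rw [hcol, integral_indicator measurableSet_Ici, Measure.restrict_restrict measurableSet_Ici,
    show Ici θ ∩ Icc a b = Icc θ b by ext; simp only [mem_inter_iff, mem_Ici, mem_Icc]; grind,
    intervalIntegral.integral_of_le hθ.2, integral_Icc_eq_integral_Ioc]

variable (hab : a ≤ b) (hf : IntegrableOn (Function.uncurry f) (Icc a b ×ˢ Icc a b))
include hf

omit [NormedSpace ℝ E] hab in
lemma MeasureTheory.IntegrableOn.integrable_triangle_indicator :
    Integrable ({z : ℝ × ℝ | z.2 ≤ z.1}.indicator (Function.uncurry f))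
      ((volume.restrict (Icc a b)).prod (volume.restrict (Icc a b))) := by
  rw [Measure.prod_restrict]
  exact hf.indicator (measurableSet_le measurable_snd measurable_fst)

include hab

lemma intervalIntegrable_intervalIntegral_lower :
    IntervalIntegrable (fun s => ∫ θ in a..s, f s θ) volume a b := by
  refine (intervalIntegrable_iff_integrableOn_Icc_of_le hab).2 <| IntegrableOn.congr_fun ?_
    (fun s hs => setIntegral_Icc_triangle_indicator_fst hs) measurableSet_Icc
  exact hf.integrable_triangle_indicator.integral_prod_left

lemma intervalIntegrable_intervalIntegral_upper :
    IntervalIntegrable (fun θ => ∫ s in θ..b, f s θ) volume a b := by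
  refine (intervalIntegrable_iff_integrableOn_Icc_of_le hab).2 <| IntegrableOn.congr_fun ?_
    (fun θ hθ => setIntegral_Icc_triangle_indicator_snd hθ) measurableSet_Icc
  exact hf.integrable_triangle_indicator.integral_prod_right

lemma intervalIntegral_intervalIntegral_triangle_swap :
    ∫ s in a..b, ∫ θ in a..s, f s θ = ∫ θ in a..b, ∫ s in θ..b, f s θ := by
  simp only [intervalIntegral.integral_of_le hab, ← integral_Icc_eq_integral_Ioc]
  calc ∫ s in Icc a b, ∫ θ in a..s, f s θ
      = ∫ s in Icc a b, ∫ θ in Icc a b,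
          {z : ℝ × ℝ | z.2 ≤ z.1}.indicator (Function.uncurry f) (s, θ) :=
        setIntegral_congr_fun measurableSet_Icc fun s hs =>
          (setIntegral_Icc_triangle_indicator_fst hs).symm
    _ = ∫ θ in Icc a b, ∫ s in Icc a b,
          {z : ℝ × ℝ | z.2 ≤ z.1}.indicator (Function.uncurry f) (s, θ) :=
        integral_integral_swap hf.integrable_triangle_indicator
    _ = ∫ θ in Icc a b, ∫ s in θ..b, f s θ :=
        setIntegral_congr_fun measurableSet_Icc fun θ hθ =>
          setIntegral_Icc_triangle_indicator_snd hθ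

end Triangle

section Volterra

variable {q n : ℕ} {a b : ℝ} {K : ℝ → ℝ → Matrix (Fin q) (Fin n) ℝ}
  {y₁ : ℝ → EuclideanSpace ℝ (Fin n)} {y₂ : ℝ → EuclideanSpace ℝ (Fin q)}

lemma integrableOn_inner_mulVecE_kernel
    (hK : ContinuousOn (Function.uncurry K) (Icc a b ×ˢ Icc a b))
    (hy₁ : IntegrableOn y₁ (Icc a b)) (hy₂ : IntegrableOn y₂ (Icc a b)) :
    IntegrableOn (Function.uncurry fun s θ => ⟪mulVecE (K s θ) (y₁ θ), y₂ s⟫)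
      (Icc a b ×ˢ Icc a b) := by
  have hsq : MeasurableSet (Icc a b ×ˢ Icc a b) := measurableSet_Icc.prod measurableSet_Icc
  have hμ : (volume.restrict (Icc a b)).prod (volume.restrict (Icc a b))
      = volume.restrict (Icc a b ×ˢ Icc a b) := Measure.prod_restrict _ _
  obtain ⟨C, hC⟩ := exists_norm_mulVecE_le (isCompact_Icc.prod isCompact_Icc) hK
  have hmeas : AEStronglyMeasurable (fun z : ℝ × ℝ => ⟪mulVecE (K z.1 z.2) (y₁ z.2), y₂ z.1⟫)
      ((volume.restrict (Icc a b)).prod (volume.restrict (Icc a b))) := by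
    refine AEStronglyMeasurable.inner ?_ hy₂.aestronglyMeasurable.comp_fst
    refine AEStronglyMeasurable.mulVecE ?_ hy₁.aestronglyMeasurable.comp_snd
    rw [hμ]
    exact hK.aestronglyMeasurable hsq
  rw [IntegrableOn, ← hμ]
  refine ((hy₂.norm.mul_prod hy₁.norm).const_mul C).mono' hmeas ?_
  rw [hμ]
  filter_upwards [ae_restrict_mem hsq] with z hz
  calc ‖⟪mulVecE (K z.1 z.2) (y₁ z.2), y₂ z.1⟫‖
      ≤ ‖mulVecE (K z.1 z.2) (y₁ z.2)‖ * ‖y₂ z.1‖ := norm_inner_le_norm _ _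
    _ ≤ C * ‖y₁ z.2‖ * ‖y₂ z.1‖ := by gcongr; exact hC z hz _
    _ = C * (‖y₂ z.1‖ * ‖y₁ z.2‖) := by ring

variable (hab : a ≤ b) (hK : ContinuousOn (Function.uncurry K) (Icc a b ×ˢ Icc a b))
  (hy₁ : IntegrableOn y₁ (Icc a b)) (hy₂ : IntegrableOn y₂ (Icc a b))
include hab hK hy₁ hy₂

omit hy₂ in
lemma inner_volterra_lower_eq {s : ℝ} (hs : s ∈ Icc a b) :
    ⟪∫ θ in a..s, mulVecE (K s θ) (y₁ θ), y₂ s⟫ = ∫ θ in a..s, ⟪mulVecE (K s θ) (y₁ θ), y₂ s⟫ :=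
  inner_intervalIntegral_mulVecE (hK.uncurry_left s hs) hy₁ (left_mem_Icc.2 hab) hs _

omit hy₁ in
lemma inner_volterra_upper_transpose_eq {θ : ℝ} (hθ : θ ∈ Icc a b) :
    ⟪∫ s in θ..b, mulVecE (K s θ)ᵀ (y₂ s), y₁ θ⟫
      = ∫ s in θ..b, ⟪mulVecE (K s θ) (y₁ θ), y₂ s⟫ := by
  rw [inner_intervalIntegral_mulVecE (hK.uncurry_right θ hθ).matrix_transpose hy₂ hθ
    (right_mem_Icc.2 hab)]
  simp only [inner_mulVecE_transpose]

lemma intervalIntegrable_inner_volterra_lower :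
    IntervalIntegrable (fun s => ⟪∫ θ in a..s, mulVecE (K s θ) (y₁ θ), y₂ s⟫) volume a b :=
  (intervalIntegrable_intervalIntegral_lower hab
    (integrableOn_inner_mulVecE_kernel hK hy₁ hy₂)).congr fun _ hs =>
      (inner_volterra_lower_eq hab hK hy₁ (uIcc_of_le hab ▸ uIoc_subset_uIcc hs)).symm

lemma intervalIntegrable_inner_volterra_upper_transpose :
    IntervalIntegrable (fun θ => ⟪∫ s in θ..b, mulVecE (K s θ)ᵀ (y₂ s), y₁ θ⟫) volume a b :=
  (intervalIntegrable_intervalIntegral_upper hab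
    (integrableOn_inner_mulVecE_kernel hK hy₁ hy₂)).congr fun _ hθ =>
      (inner_volterra_upper_transpose_eq hab hK hy₂
        (uIcc_of_le hab ▸ uIoc_subset_uIcc hθ)).symm

lemma integral_inner_volterra_lower :
    ∫ s in a..b, ⟪∫ θ in a..s, mulVecE (K s θ) (y₁ θ), y₂ s⟫
      = ∫ θ in a..b, ⟪∫ s in θ..b, mulVecE (K s θ)ᵀ (y₂ s), y₁ θ⟫ := by
  have hIcc : ∀ {s}, s ∈ uIcc a b → s ∈ Icc a b := fun hs => uIcc_of_le hab ▸ hs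
  calc ∫ s in a..b, ⟪∫ θ in a..s, mulVecE (K s θ) (y₁ θ), y₂ s⟫
      = ∫ s in a..b, ∫ θ in a..s, ⟪mulVecE (K s θ) (y₁ θ), y₂ s⟫ :=
        intervalIntegral.integral_congr fun _ hs =>
          inner_volterra_lower_eq hab hK hy₁ (hIcc hs)
    _ = ∫ θ in a..b, ∫ s in θ..b, ⟪mulVecE (K s θ) (y₁ θ), y₂ s⟫ :=
        intervalIntegral_intervalIntegral_triangle_swap hab
          (integrableOn_inner_mulVecE_kernel hK hy₁ hy₂)
    _ = ∫ θ in a..b, ⟪∫ s in θ..b, mulVecE (K s θ)ᵀ (y₂ s), y₁ θ⟫ :=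
        intervalIntegral.integral_congr fun _ hθ =>
          (inner_volterra_upper_transpose_eq hab hK hy₂ (hIcc hθ)).symm

lemma intervalIntegrable_inner_volterra_upper :
    IntervalIntegrable (fun s => ⟪∫ θ in s..b, mulVecE (K s θ) (y₁ θ), y₂ s⟫) volume a b := by
  simpa only [transpose_transpose] using
    intervalIntegrable_inner_volterra_upper_transpose hab hK.transpose_swap hy₂ hy₁

lemma integral_inner_volterra_upper :
    ∫ s in a..b, ⟪∫ θ in s..b, mulVecE (K s θ) (y₁ θ), y₂ s⟫
      = ∫ s in a..b, ⟪∫ θ in a..s, mulVecE (K θ s)ᵀ (y₂ θ), y₁ s⟫ := by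
  simpa only [transpose_transpose] using
    (integral_inner_volterra_lower hab hK.transpose_swap hy₂ hy₁).symm

end Volterra

lemma MeasureTheory.MemLp.integrable_inner {E : Type*} [NormedAddCommGroup E]
    [InnerProductSpace ℝ E] {α : Type*} [MeasurableSpace α] {μ : Measure α} {f g : α → E}
    (hf : MemLp f 2 μ) (hg : MemLp g 2 μ) : Integrable (fun x => ⟪f x, g x⟫) μ :=
  (L2.integrable_inner (𝕜 := ℝ) (hf.toLp f) (hg.toLp g)).congr <| by
    filter_upwards [hf.coeFn_toLp, hg.coeFn_toLp] with x hfx hgx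
    rw [hfx, hgx]

section ThreePI

variable {q n : ℕ} {a b : ℝ} {R₀ : ℝ → Matrix (Fin q) (Fin n) ℝ}
  {R₁ R₂ : ℝ → ℝ → Matrix (Fin q) (Fin n) ℝ}
  {y₁ : ℝ → EuclideanSpace ℝ (Fin n)} {y₂ : ℝ → EuclideanSpace ℝ (Fin q)}
  (hab : a ≤ b) (hR₀ : ContinuousOn R₀ (Icc a b))
  (hR₁ : ContinuousOn (Function.uncurry R₁) (Icc a b ×ˢ Icc a b))
  (hR₂ : ContinuousOn (Function.uncurry R₂) (Icc a b ×ˢ Icc a b))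
  (hy₁ : MemLp y₁ 2 (volume.restrict (Icc a b))) (hy₂ : MemLp y₂ 2 (volume.restrict (Icc a b)))
include hab hR₀ hy₁ hy₂

lemma intervalIntegrable_inner_mulVecE :
    IntervalIntegrable (fun s => ⟪mulVecE (R₀ s) (y₁ s), y₂ s⟫) volume a b :=
  (intervalIntegrable_iff_integrableOn_Icc_of_le hab).2
    ((hy₁.mulVecE_of_continuousOn isCompact_Icc hR₀).integrable_inner hy₂)

include hR₁ hR₂

lemma intervalIntegrable_inner_threePI :
    IntervalIntegrable (fun s => ⟪threePI a b R₀ R₁ R₂ y₁ s, y₂ s⟫) volume a b := by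
  have hy₁' := hy₁.integrable one_le_two
  have hy₂' := hy₂.integrable one_le_two
  simp only [threePI, inner_add_left]
  exact ((intervalIntegrable_inner_mulVecE hab hR₀ hy₁ hy₂).add
    (intervalIntegrable_inner_volterra_lower hab hR₁ hy₁' hy₂')).add
    (intervalIntegrable_inner_volterra_upper hab hR₂ hy₁' hy₂')

lemma integral_inner_threePI_eq_add :
    ∫ s in a..b, ⟪threePI a b R₀ R₁ R₂ y₁ s, y₂ s⟫
      = (∫ s in a..b, ⟪mulVecE (R₀ s) (y₁ s), y₂ s⟫)
        + (∫ s in a..b, ⟪∫ θ in a..s, mulVecE (R₁ s θ) (y₁ θ), y₂ s⟫)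
        + ∫ s in a..b, ⟪∫ θ in s..b, mulVecE (R₂ s θ) (y₁ θ), y₂ s⟫ := by
  have hy₁' := hy₁.integrable one_le_two
  have hy₂' := hy₂.integrable one_le_two
  have h₀ := intervalIntegrable_inner_mulVecE hab hR₀ hy₁ hy₂
  have h₁ := intervalIntegrable_inner_volterra_lower hab hR₁ hy₁' hy₂'
  have h₂ := intervalIntegrable_inner_volterra_upper hab hR₂ hy₁' hy₂'
  simp only [threePI, inner_add_left]
  rw [intervalIntegral.integral_add (h₀.add h₁) h₂, intervalIntegral.integral_add h₀ h₁]

lemma integral_inner_threePI :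
    ∫ s in a..b, ⟪threePI a b R₀ R₁ R₂ y₁ s, y₂ s⟫
      = ∫ s in a..b, ⟪threePI a b (fun s => (R₀ s)ᵀ) (fun s η => (R₂ η s)ᵀ)
          (fun s η => (R₁ η s)ᵀ) y₂ s, y₁ s⟫ := by
  rw [integral_inner_threePI_eq_add hab hR₀ hR₁ hR₂ hy₁ hy₂,
    integral_inner_threePI_eq_add hab hR₀.matrix_transpose hR₂.transpose_swap
      hR₁.transpose_swap hy₂ hy₁,
    integral_inner_volterra_lower hab hR₁ (hy₁.integrable one_le_two) (hy₂.integrable one_le_two),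
    integral_inner_volterra_upper hab hR₂ (hy₁.integrable one_le_two) (hy₂.integrable one_le_two)]
  simp only [inner_mulVecE_transpose]
  ring

end ThreePI

lemma inner_fourPIfin_add_integral_inner_fourPIfun {p q n m : ℕ} {a b : ℝ} (hab : a ≤ b)
    {P : Matrix (Fin p) (Fin m) ℝ} {Q₁ : ℝ → Matrix (Fin p) (Fin n) ℝ}
    {Q₂ : ℝ → Matrix (Fin q) (Fin m) ℝ} {R₀ : ℝ → Matrix (Fin q) (Fin n) ℝ}
    {R₁ R₂ : ℝ → ℝ → Matrix (Fin q) (Fin n) ℝ}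
    (hQ₁ : ContinuousOn Q₁ (Icc a b)) (hQ₂ : ContinuousOn Q₂ (Icc a b))
    {x₁ : EuclideanSpace ℝ (Fin m)} {y₁ : ℝ → EuclideanSpace ℝ (Fin n)}
    {x₂ : EuclideanSpace ℝ (Fin p)} {y₂ : ℝ → EuclideanSpace ℝ (Fin q)}
    (hy₁ : IntegrableOn y₁ (Icc a b)) (hy₂ : IntegrableOn y₂ (Icc a b))
    (hR : IntervalIntegrable (fun s => ⟪threePI a b R₀ R₁ R₂ y₁ s, y₂ s⟫) volume a b) :
    ⟪fourPIfin a b P Q₁ x₁ y₁, x₂⟫ + ∫ s in a..b, ⟪fourPIfun a b Q₂ R₀ R₁ R₂ x₁ y₁ s, y₂ s⟫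
      = ⟪mulVecE P x₁, x₂⟫ + (∫ s in a..b, ⟪mulVecE (Q₁ s) (y₁ s), x₂⟫)
        + (∫ s in a..b, ⟪mulVecE (Q₂ s) x₁, y₂ s⟫)
        + ∫ s in a..b, ⟪threePI a b R₀ R₁ R₂ y₁ s, y₂ s⟫ := by
  have hQ₁y₁ := (intervalIntegrable_iff_integrableOn_Icc_of_le hab).2
    (hy₁.mulVecE_of_continuousOn isCompact_Icc hQ₁)
  have hQ₂x₁ : IntervalIntegrable (fun s => ⟪mulVecE (Q₂ s) x₁, y₂ s⟫) volume a b := by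
    simp only [← inner_mulVecE_transpose (Q₂ _)]
    exact (intervalIntegrable_iff_integrableOn_Icc_of_le hab).2
      ((hy₂.mulVecE_of_continuousOn isCompact_Icc hQ₂.matrix_transpose).inner_const x₁)
  simp only [fourPIfin, fourPIfun, inner_add_left]
  rw [inner_intervalIntegral_left hQ₁y₁, intervalIntegral.integral_add hQ₂x₁ hR]
  ring

/-- The adjoint of a 4-PI operator with respect to the `ℝ × L²` inner product is the 4-PI
operator with parameters `P̂ = Pᵀ`, `Q̂₁(s) = Q₂(s)ᵀ`, `Q̂₂(s) = Q₁(s)ᵀ`, `R̂₀(s) = R₀(s)ᵀ`,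
`R̂₁(s,η) = R₂(η,s)ᵀ`, `R̂₂(s,η) = R₁(η,s)ᵀ`. -/
theorem fourPI_adjoint {p q n m : ℕ} {a b : ℝ} (hab : a < b)
    (P : Matrix (Fin p) (Fin m) ℝ)
    (Q₁ : ℝ → Matrix (Fin p) (Fin n) ℝ)
    (Q₂ : ℝ → Matrix (Fin q) (Fin m) ℝ)
    (R₀ : ℝ → Matrix (Fin q) (Fin n) ℝ)
    (R₁ R₂ : ℝ → ℝ → Matrix (Fin q) (Fin n) ℝ)
    (hQ₁ : ContinuousOn Q₁ (Icc a b))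
    (hQ₂ : ContinuousOn Q₂ (Icc a b))
    (hR₀ : ContinuousOn R₀ (Icc a b))
    (hR₁ : ContinuousOn (fun z : ℝ × ℝ => R₁ z.1 z.2) (Icc a b ×ˢ Icc a b))
    (hR₂ : ContinuousOn (fun z : ℝ × ℝ => R₂ z.1 z.2) (Icc a b ×ˢ Icc a b))
    (x₁ : EuclideanSpace ℝ (Fin m)) (y₁ : ℝ → EuclideanSpace ℝ (Fin n))
    (x₂ : EuclideanSpace ℝ (Fin p)) (y₂ : ℝ → EuclideanSpace ℝ (Fin q))
    (hy₁ : MemLp y₁ 2 (volume.restrict (Icc a b)))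
    (hy₂ : MemLp y₂ 2 (volume.restrict (Icc a b))) :
    ⟪fourPIfin a b P Q₁ x₁ y₁, x₂⟫
        + ∫ s in a..b, ⟪fourPIfun a b Q₂ R₀ R₁ R₂ x₁ y₁ s, y₂ s⟫
      = ⟪x₁, fourPIfin a b Pᵀ (fun s => (Q₂ s)ᵀ) x₂ y₂⟫
        + ∫ s in a..b, ⟪y₁ s, fourPIfun a b (fun s => (Q₁ s)ᵀ) (fun s => (R₀ s)ᵀ)
            (fun s η => (R₂ η s)ᵀ) (fun s η => (R₁ η s)ᵀ) x₂ y₂ s⟫ := by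
  have hab' := hab.le
  have hR₁' : ContinuousOn (Function.uncurry R₁) (Icc a b ×ˢ Icc a b) := hR₁
  have hR₂' : ContinuousOn (Function.uncurry R₂) (Icc a b ×ˢ Icc a b) := hR₂
  simp_rw [real_inner_comm _ x₁, real_inner_comm _ (y₁ _)]
  rw [inner_fourPIfin_add_integral_inner_fourPIfun hab' hQ₁ hQ₂
      (hy₁.integrable one_le_two) (hy₂.integrable one_le_two)
      (intervalIntegrable_inner_threePI hab' hR₀ hR₁' hR₂' hy₁ hy₂),
    inner_fourPIfin_add_integral_inner_fourPIfun hab' hQ₂.matrix_transpose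
      hQ₁.matrix_transpose (hy₂.integrable one_le_two) (hy₁.integrable one_le_two)
      (intervalIntegrable_inner_threePI hab' hR₀.matrix_transpose hR₂'.transpose_swap
        hR₁'.transpose_swap hy₂ hy₁),
    integral_inner_threePI hab' hR₀ hR₁' hR₂' hy₁ hy₂]
  simp only [inner_mulVecE_transpose]
  ring
end

section
/- Let A : L²([0,1], ℝ) → L²([0,1], ℝ) be the Volterra integral operator defined by (A f)(s) = ∫_0^s f(t) dt. Then the operator norm of A (with respect to the L² norm) equals 2/π. -/
/-!
The upper bound is a Schur test for the kernel `1_{t ≤ s}` with the test functions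
`p t = cos (π t / 2)` and `q s = sin (π s / 2)`, which satisfy `∫₀ˢ p = (2/π) q s` and
`∫ₜ¹ q = (2/π) p t`: Cauchy–Schwarz against the weight `p`, followed by Tonelli, gives
`‖A f‖² ≤ (2/π)² ‖f‖²`. The bound is attained at `f = p`, since `A p = (2/π) q` and `‖p‖ = ‖q‖`.
-/

open MeasureTheory Set
open scoped ENNReal

namespace MeasureTheory

variable {α β : Type*} [MeasurableSpace α] [MeasurableSpace β] {μ : Measure α} {ν : Measure β}

theorem sq_lintegral_mul_le_weighted {w g p : β → ℝ≥0∞} (hw : Measurable w) (hg : Measurable g)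
    (hp : Measurable p) (hp₀ : ∀ᵐ t ∂ν, p t ≠ 0) (hp_top : ∀ᵐ t ∂ν, p t ≠ ∞) :
    (∫⁻ t, w t * g t ∂ν) ^ 2 ≤ (∫⁻ t, w t * p t ∂ν) * ∫⁻ t, w t * (g t ^ 2 / p t) ∂ν := by
  have h_split : (fun t ↦ w t * g t) =ᵐ[ν]
      fun t ↦ (w t * p t) ^ (2⁻¹ : ℝ) * (w t * (g t ^ 2 / p t)) ^ (2⁻¹ : ℝ) := by
    filter_upwards [hp₀, hp_top] with t h₀ h_top
    have h_prod : w t * p t * (w t * (g t ^ 2 / p t)) = (w t * g t) ^ 2 := by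
      rw [mul_mul_mul_comm, ENNReal.mul_div_cancel h₀ h_top]; ring
    rw [← ENNReal.mul_rpow_of_nonneg _ _ (by norm_num), h_prod]
    simpa using (ENNReal.pow_rpow_inv_natCast two_ne_zero (w t * g t)).symm
  have h_holder := ENNReal.lintegral_mul_norm_pow_le (μ := ν) (hw.mul hp).aemeasurable
    (hw.mul ((hg.pow_const 2).div hp)).aemeasurable (p := 2⁻¹) (q := 2⁻¹)
    (by norm_num) (by norm_num) (by norm_num)
  calc (∫⁻ t, w t * g t ∂ν) ^ 2
      ≤ ((∫⁻ t, w t * p t ∂ν) ^ (2⁻¹ : ℝ) * (∫⁻ t, w t * (g t ^ 2 / p t) ∂ν) ^ (2⁻¹ : ℝ)) ^ 2 := by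
        rw [lintegral_congr_ae h_split]; gcongr; exact h_holder
    _ = (∫⁻ t, w t * p t ∂ν) * ∫⁻ t, w t * (g t ^ 2 / p t) ∂ν := by
        have h_sq : ∀ x : ℝ≥0∞, (x ^ (2⁻¹ : ℝ)) ^ 2 = x := by
          simpa using ENNReal.rpow_inv_natCast_pow two_ne_zero
        rw [mul_pow, h_sq, h_sq]

theorem lintegral_sq_lintegral_kernel_le [SFinite μ] [SFinite ν] {K : α → β → ℝ≥0∞}
    (hK : Measurable (Function.uncurry K)) {p : β → ℝ≥0∞} {q : α → ℝ≥0∞} (hp : Measurable p)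
    (hq : Measurable q) (hp₀ : ∀ᵐ t ∂ν, p t ≠ 0) (hp_top : ∀ᵐ t ∂ν, p t ≠ ∞) {a b : ℝ≥0∞}
    (hKp : ∀ᵐ s ∂μ, ∫⁻ t, K s t * p t ∂ν ≤ a * q s)
    (hKq : ∀ᵐ t ∂ν, ∫⁻ s, K s t * q s ∂μ ≤ b * p t) {g : β → ℝ≥0∞} (hg : Measurable g) :
    ∫⁻ s, (∫⁻ t, K s t * g t ∂ν) ^ 2 ∂μ ≤ a * b * ∫⁻ t, g t ^ 2 ∂ν := by
  set h : β → ℝ≥0∞ := fun t ↦ g t ^ 2 / p t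
  have hh : Measurable h := (hg.pow_const 2).div hp
  calc ∫⁻ s, (∫⁻ t, K s t * g t ∂ν) ^ 2 ∂μ
      ≤ ∫⁻ s, a * (q s * ∫⁻ t, K s t * h t ∂ν) ∂μ := by
        refine lintegral_mono_ae ?_
        filter_upwards [hKp] with s hs
        calc (∫⁻ t, K s t * g t ∂ν) ^ 2
            ≤ (∫⁻ t, K s t * p t ∂ν) * ∫⁻ t, K s t * h t ∂ν :=
              sq_lintegral_mul_le_weighted hK.of_uncurry_left hg hp hp₀ hp_top
          _ ≤ a * q s * ∫⁻ t, K s t * h t ∂ν := by gcongr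
          _ = a * (q s * ∫⁻ t, K s t * h t ∂ν) := mul_assoc _ _ _
    _ = a * ∫⁻ t, (∫⁻ s, K s t * q s ∂μ) * h t ∂ν := by
        have h_meas : Measurable (Function.uncurry fun s t ↦ q s * (K s t * h t)) :=
          (hq.comp measurable_fst).mul (hK.mul (hh.comp measurable_snd))
        rw [lintegral_const_mul (f := fun s ↦ q s * ∫⁻ t, K s t * h t ∂ν) _
          (hq.mul (hK.mul (hh.comp measurable_snd)).lintegral_prod_right)]
        congr 1
        calc ∫⁻ s, q s * ∫⁻ t, K s t * h t ∂ν ∂μ = ∫⁻ s, ∫⁻ t, q s * (K s t * h t) ∂ν ∂μ :=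
              lintegral_congr fun s ↦ (lintegral_const_mul _ (hK.of_uncurry_left.mul hh)).symm
          _ = ∫⁻ t, ∫⁻ s, q s * (K s t * h t) ∂μ ∂ν := lintegral_lintegral_swap h_meas.aemeasurable
          _ = ∫⁻ t, (∫⁻ s, K s t * q s ∂μ) * h t ∂ν := lintegral_congr fun t ↦ by
              rw [← lintegral_mul_const (f := fun s ↦ K s t * q s) _ (hK.of_uncurry_right.mul hq)]
              simp only [mul_left_comm, mul_assoc]
    _ ≤ a * ∫⁻ t, b * p t * h t ∂ν := by
        gcongr a * ?_
        refine lintegral_mono_ae ?_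
        filter_upwards [hKq] with t ht
        gcongr
    _ = a * b * ∫⁻ t, g t ^ 2 ∂ν := by
        rw [mul_assoc, ← lintegral_const_mul _ (hg.pow_const 2)]
        congr 1
        refine lintegral_congr_ae ?_
        filter_upwards [hp₀, hp_top] with t h₀ h_top
        rw [mul_assoc, ENNReal.mul_div_cancel h₀ h_top]

theorem eLpNorm_two_sq {ε : Type*} [ENorm ε] (f : α → ε) :
    eLpNorm f 2 μ ^ 2 = ∫⁻ x, ‖f x‖ₑ ^ 2 ∂μ := by
  simpa using eLpNorm_nnreal_pow_eq_lintegral (μ := μ) (f := f) (p := 2) two_ne_zero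

theorem MemLp.norm_toLp_two_sq {f : α → ℝ} (hf : MemLp f 2 μ) :
    ‖hf.toLp f‖ ^ 2 = ∫ x, f x ^ 2 ∂μ := by
  rw [← real_inner_self_eq_norm_sq, L2.inner_def]
  refine integral_congr_ae ?_
  filter_upwards [hf.coeFn_toLp] with x hx
  simp [hx, sq]

theorem Lp.norm_le_mul_norm_of_eLpNorm_le {E F : Type*} [NormedAddCommGroup E]
    [NormedAddCommGroup F] {p q : ℝ≥0∞} {f : Lp E p μ} {g : Lp F q ν} {C : ℝ} (hC : 0 ≤ C)
    (h : eLpNorm g q ν ≤ ENNReal.ofReal C * eLpNorm f p μ) : ‖g‖ ≤ C * ‖f‖ := by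
  rw [Lp.norm_def, Lp.norm_def, ← ENNReal.toReal_ofReal hC, ← ENNReal.toReal_mul]
  exact ENNReal.toReal_mono (ENNReal.mul_ne_top ENNReal.ofReal_ne_top (Lp.eLpNorm_ne_top f)) h

end MeasureTheory

theorem lintegral_Icc_ofReal_eq_intervalIntegral {f : ℝ → ℝ} {a b : ℝ} (hab : a ≤ b)
    (hf : IntegrableOn f (Icc a b)) (hf₀ : ∀ x ∈ Icc a b, 0 ≤ f x) :
    ∫⁻ x in Icc a b, ENNReal.ofReal (f x) = ENNReal.ofReal (∫ x in a..b, f x) := by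
  rw [intervalIntegral.integral_of_le hab, ← integral_Icc_eq_integral_Ioc,
    ofReal_integral_eq_lintegral_ofReal hf (ae_restrict_of_forall_mem measurableSet_Icc hf₀)]

namespace Real
open intervalIntegral

theorem integral_cos_pi_div_two_mul (s : ℝ) :
    ∫ t in (0:ℝ)..s, cos (π / 2 * t) = 2 / π * sin (π / 2 * s) := by
  rw [integral_comp_mul_left _ (by positivity), integral_cos]
  simp [div_eq_mul_inv, mul_comm]

theorem integral_sin_pi_div_two_mul (t : ℝ) :
    ∫ s in t..1, sin (π / 2 * s) = 2 / π * cos (π / 2 * t) := by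
  rw [integral_comp_mul_left _ (by positivity), integral_sin, mul_one, cos_pi_div_two]
  simp [div_eq_mul_inv, mul_comm]

theorem integral_cos_sq_pi_div_two_mul :
    ∫ t in (0:ℝ)..1, cos (π / 2 * t) ^ 2 = 1 / 2 := by
  rw [integral_comp_mul_left (fun x ↦ cos x ^ 2) (by positivity), integral_cos_sq]
  simp only [mul_one, mul_zero, cos_pi_div_two, sin_zero, zero_mul, smul_eq_mul]
  field_simp
  ring

theorem integral_sin_sq_pi_div_two_mul :
    ∫ t in (0:ℝ)..1, sin (π / 2 * t) ^ 2 = 1 / 2 := by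
  rw [integral_comp_mul_left (fun x ↦ sin x ^ 2) (by positivity), integral_sin_sq]
  simp only [mul_one, mul_zero, cos_pi_div_two, sin_zero, zero_mul, smul_eq_mul]
  field_simp
  ring

end Real

section Volterra

open Real

theorem lintegral_sq_lintegral_Icc_le {g : ℝ → ℝ≥0∞} (hg : Measurable g) :
    ∫⁻ s in Icc 0 1, (∫⁻ t in Icc 0 s, g t) ^ 2 ≤
      ENNReal.ofReal (2 / π) * ENNReal.ofReal (2 / π) * ∫⁻ t in Icc 0 1, g t ^ 2 := by
  set K : ℝ → ℝ → ℝ≥0∞ := fun s t ↦ if t ≤ s then 1 else 0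
  have hK : Measurable (Function.uncurry K) :=
    Measurable.ite (measurableSet_le measurable_snd measurable_fst) measurable_const
      measurable_const
  have hK_left : ∀ s ≤ 1, ∀ h : ℝ → ℝ≥0∞,
      ∫⁻ t in Icc 0 1, K s t * h t = ∫⁻ t in Icc 0 s, h t := by
    intro s hs h
    have h_set : Iic s ∩ Icc 0 1 = Icc 0 s := by
      ext; simp only [mem_inter_iff, mem_Iic, mem_Icc]; grind
    have h_ind : ∀ t, K s t * h t = (Iic s).indicator h t := fun t ↦ by
      simp [K, indicator_apply]
    rw [lintegral_congr h_ind, lintegral_indicator measurableSet_Iic,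
      Measure.restrict_restrict measurableSet_Iic, h_set]
  have hK_right : ∀ t, 0 ≤ t → ∀ h : ℝ → ℝ≥0∞,
      ∫⁻ s in Icc 0 1, K s t * h s = ∫⁻ s in Icc t 1, h s := by
    intro t ht h
    have h_set : Ici t ∩ Icc 0 1 = Icc t 1 := by
      ext; simp only [mem_inter_iff, mem_Ici, mem_Icc]; grind
    have h_ind : ∀ s, K s t * h s = (Ici t).indicator h s := fun s ↦ by
      simp [K, indicator_apply]
    rw [lintegral_congr h_ind, lintegral_indicator measurableSet_Ici,
      Measure.restrict_restrict measurableSet_Ici, h_set]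
  have h_cos_nonneg : ∀ x ∈ Icc (0:ℝ) 1, 0 ≤ cos (π / 2 * x) := fun x hx ↦
    cos_nonneg_of_mem_Icc ⟨by nlinarith [pi_pos, hx.1], by nlinarith [pi_pos, hx.2]⟩
  have h_sin_nonneg : ∀ x ∈ Icc (0:ℝ) 1, 0 ≤ sin (π / 2 * x) := fun x hx ↦
    sin_nonneg_of_nonneg_of_le_pi (by nlinarith [pi_pos, hx.1]) (by nlinarith [pi_pos, hx.2])
  have h_cos_ne_zero :
      ∀ᵐ t ∂volume.restrict (Icc (0:ℝ) 1), ENNReal.ofReal (cos (π / 2 * t)) ≠ 0 := by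
    rw [← Measure.restrict_congr_set Ico_ae_eq_Icc]
    filter_upwards [ae_restrict_mem measurableSet_Ico] with t ht
    exact (ENNReal.ofReal_pos.2 (cos_pos_of_mem_Ioo
      ⟨by nlinarith [pi_pos, ht.1], by nlinarith [pi_pos, ht.2]⟩)).ne'
  calc ∫⁻ s in Icc 0 1, (∫⁻ t in Icc 0 s, g t) ^ 2
      = ∫⁻ s in Icc 0 1, (∫⁻ t in Icc 0 1, K s t * g t) ^ 2 :=
        setLIntegral_congr_fun measurableSet_Icc fun s hs ↦ by rw [hK_left s hs.2]
    _ ≤ _ := by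
      refine lintegral_sq_lintegral_kernel_le hK (p := fun t ↦ ENNReal.ofReal (cos (π / 2 * t)))
        (q := fun s ↦ ENNReal.ofReal (sin (π / 2 * s))) (by fun_prop) (by fun_prop) h_cos_ne_zero
        (ae_of_all _ fun _ ↦ ENNReal.ofReal_ne_top) ?_ ?_ hg
      · filter_upwards [ae_restrict_mem measurableSet_Icc] with s hs
        rw [hK_left s hs.2, lintegral_Icc_ofReal_eq_intervalIntegral hs.1
          (by fun_prop : Continuous _).integrableOn_Icc
          (fun x hx ↦ h_cos_nonneg x ⟨hx.1, hx.2.trans hs.2⟩), integral_cos_pi_div_two_mul,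
          ENNReal.ofReal_mul (by positivity)]
      · filter_upwards [ae_restrict_mem measurableSet_Icc] with t ht
        rw [hK_right t ht.1, lintegral_Icc_ofReal_eq_intervalIntegral ht.2
          (by fun_prop : Continuous _).integrableOn_Icc
          (fun x hx ↦ h_sin_nonneg x ⟨ht.1.trans hx.1, hx.2⟩), integral_sin_pi_div_two_mul,
          ENNReal.ofReal_mul (by positivity)]

theorem eLpNorm_intervalIntegral_le {f : ℝ → ℝ} (hf : Measurable f) :
    eLpNorm (fun s ↦ ∫ t in (0:ℝ)..s, f t) 2 (volume.restrict (Icc (0:ℝ) 1)) ≤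
      ENNReal.ofReal (2 / π) * eLpNorm f 2 (volume.restrict (Icc (0:ℝ) 1)) := by
  rw [← ENNReal.pow_le_pow_left_iff two_ne_zero, mul_pow, eLpNorm_two_sq, eLpNorm_two_sq, sq]
  calc ∫⁻ s in Icc 0 1, ‖∫ t in (0:ℝ)..s, f t‖ₑ ^ 2
      ≤ ∫⁻ s in Icc 0 1, (∫⁻ t in Icc 0 s, ‖f t‖ₑ) ^ 2 := by
        refine lintegral_mono_ae ?_
        filter_upwards [ae_restrict_mem measurableSet_Icc] with s hs
        rw [intervalIntegral.integral_of_le hs.1]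
        gcongr
        exact (enorm_integral_le_lintegral_enorm _).trans (lintegral_mono_set Ioc_subset_Icc_self)
    _ ≤ _ := lintegral_sq_lintegral_Icc_le hf.enorm

theorem opNorm_le_two_div_pi
    (A : Lp ℝ 2 (volume.restrict (Icc (0:ℝ) 1)) →L[ℝ] Lp ℝ 2 (volume.restrict (Icc (0:ℝ) 1)))
    (hA : ∀ f, ∀ᵐ s ∂(volume.restrict (Icc (0:ℝ) 1)), (A f) s = ∫ t in (0:ℝ)..s, f t) :
    ‖A‖ ≤ 2 / π :=
  A.opNorm_le_bound (by positivity) fun f ↦ Lp.norm_le_mul_norm_of_eLpNorm_le (by positivity)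
    ((eLpNorm_congr_ae (hA f)).trans_le
      (eLpNorm_intervalIntegral_le (Lp.stronglyMeasurable f).measurable))

theorem two_div_pi_le_opNorm
    (A : Lp ℝ 2 (volume.restrict (Icc (0:ℝ) 1)) →L[ℝ] Lp ℝ 2 (volume.restrict (Icc (0:ℝ) 1)))
    (hA : ∀ f, ∀ᵐ s ∂(volume.restrict (Icc (0:ℝ) 1)), (A f) s = ∫ t in (0:ℝ)..s, f t) :
    2 / π ≤ ‖A‖ := by
  have h_cos : MemLp (fun t ↦ cos (π / 2 * t)) 2 (volume.restrict (Icc (0:ℝ) 1)) :=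
    .of_bound (by fun_prop : Continuous _).aestronglyMeasurable 1
      (ae_of_all _ fun _ ↦ by simpa using abs_cos_le_one _)
  have h_sin : MemLp (fun t ↦ sin (π / 2 * t)) 2 (volume.restrict (Icc (0:ℝ) 1)) :=
    .of_bound (by fun_prop : Continuous _).aestronglyMeasurable 1
      (ae_of_all _ fun _ ↦ by simpa using abs_sin_le_one _)
  set c := h_cos.toLp
  set s := h_sin.toLp
  have h_norm_c : ‖c‖ ^ 2 = 1 / 2 := by
    rw [MemLp.norm_toLp_two_sq, integral_Icc_eq_integral_Ioc,
      ← intervalIntegral.integral_of_le zero_le_one, integral_cos_sq_pi_div_two_mul]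
  have h_norm_s : ‖s‖ ^ 2 = 1 / 2 := by
    rw [MemLp.norm_toLp_two_sq, integral_Icc_eq_integral_Ioc,
      ← intervalIntegral.integral_of_le zero_le_one, integral_sin_sq_pi_div_two_mul]
  have h_Ac : A c = (2 / π) • s := by
    have h_cos_ae := (ae_restrict_iff' measurableSet_Icc).1 h_cos.coeFn_toLp
    refine Lp.ext ?_
    filter_upwards [hA c, Lp.coeFn_smul (2 / π) s, h_sin.coeFn_toLp,
      ae_restrict_mem measurableSet_Icc] with x hAx h_smul hsx hx
    rw [hAx, h_smul, Pi.smul_apply, hsx, smul_eq_mul, ← integral_cos_pi_div_two_mul]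
    refine intervalIntegral.integral_congr_ae ?_
    filter_upwards [h_cos_ae] with t ht htx
    rw [uIoc_of_le hx.1] at htx
    exact ht ⟨htx.1.le, htx.2.trans hx.2⟩
  have h_pos : 0 < ‖c‖ := (norm_nonneg c).lt_of_ne fun h ↦ by simp [← h] at h_norm_c
  refine le_of_mul_le_mul_right ?_ h_pos
  calc 2 / π * ‖c‖ = ‖A c‖ := by
        rw [h_Ac, norm_smul, Real.norm_of_nonneg (by positivity),
          (sq_eq_sq₀ (norm_nonneg s) (norm_nonneg c)).1 (h_norm_s.trans h_norm_c.symm)]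
    _ ≤ ‖A‖ * ‖c‖ := A.le_opNorm c

end Volterra

/-- The operator norm of the Volterra integral operator `(A f)(s) = ∫_0^s f(t) dt`
on `L²([0,1], ℝ)` equals `2/π`. -/
theorem volterra_opNorm
    (A : Lp ℝ 2 (volume.restrict (Icc (0:ℝ) 1)) →L[ℝ] Lp ℝ 2 (volume.restrict (Icc (0:ℝ) 1)))
    (hA : ∀ f, ∀ᵐ s ∂(volume.restrict (Icc (0:ℝ) 1)), (A f) s = ∫ t in (0:ℝ)..s, f t) :
    ‖A‖ = 2 / Real.pi :=
  le_antisymm (opNorm_le_two_div_pi A hA) (two_div_pi_le_opNorm A hA)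
end

section
/- Let X be a real Hilbert space and let H, A, P : X → X be bounded linear operators with P self-adjoint, and suppose ⟨A x, P (H x)⟩ + ⟨H x, P (A x)⟩ ≤ 0 for all x ∈ X. Let x : ℝ → X be differentiable with H (x'(t)) = A (x(t)) for all t ≥ 0. Then the function t ↦ ⟨H (x(t)), P (H (x(t)))⟩ is nonincreasing on [0, ∞). -/
open Set
open scoped RealInnerProductSpace

theorem HasDerivAt.inner_map_self {X : Type*} [NormedAddCommGroup X] [InnerProductSpace ℝ X]
    (P : X →L[ℝ] X) {y : ℝ → X} {y' : X} {t : ℝ} (hy : HasDerivAt y y' t) :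
    HasDerivAt (fun s => ⟪y s, P (y s)⟫) (⟪y', P (y t)⟫ + ⟪y t, P y'⟫) t := by
  rw [add_comm]
  exact hy.inner ℝ (P.hasFDerivAt.comp_hasDerivAt t hy)

theorem antitoneOn_Ici_of_hasDerivAt_nonpos {f f' : ℝ → ℝ} {a : ℝ}
    (hf : ∀ t, a ≤ t → HasDerivAt f (f' t) t) (hf' : ∀ t, a < t → f' t ≤ 0) :
    AntitoneOn f (Ici a) := by
  refine antitoneOn_of_hasDerivWithinAt_nonpos (convex_Ici a)
    (fun t ht => (hf t ht).continuousAt.continuousWithinAt)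
    (fun t ht => (hf t (interior_subset ht)).hasDerivWithinAt) ?_
  rw [interior_Ici]
  exact hf'

theorem pie_lyapunov_nonincreasing_general {X : Type*} [NormedAddCommGroup X]
    [InnerProductSpace ℝ X]
    (H A P : X →L[ℝ] X)
    (hdiss : ∀ x : X, ⟪A x, P (H x)⟫ + ⟪H x, P (A x)⟫ ≤ 0)
    (x x' : ℝ → X)
    (hderiv : ∀ t : ℝ, 0 ≤ t → HasDerivAt x (x' t) t)
    (hPIE : ∀ t : ℝ, 0 ≤ t → H (x' t) = A (x t)) :
    AntitoneOn (fun t => ⟪H (x t), P (H (x t))⟫) (Ici (0:ℝ)) := by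
  refine antitoneOn_Ici_of_hasDerivAt_nonpos
    (f' := fun t => ⟪A (x t), P (H (x t))⟫ + ⟪H (x t), P (A (x t))⟫)
    (fun t ht => ?_) (fun t _ => hdiss (x t))
  have hHx : HasDerivAt (fun s => H (x s)) (A (x t)) t :=
    hPIE t ht ▸ H.hasFDerivAt.comp_hasDerivAt t (hderiv t ht)
  exact hHx.inner_map_self P

/-- Lyapunov stability for a PIE `H ẋ(t) = A x(t)`: if `P` is a self-adjoint bounded
operator with `⟨Ax, P(Hx)⟩ + ⟨Hx, P(Ax)⟩ ≤ 0` for all `x` (i.e. `A*PH + H*PA ≼ 0`),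
then `t ↦ ⟨H x(t), P (H x(t))⟩` is nonincreasing on `[0, ∞)`. -/
theorem pie_lyapunov_nonincreasing {X : Type*} [NormedAddCommGroup X]
    [InnerProductSpace ℝ X] [CompleteSpace X]
    (H A P : X →L[ℝ] X)
    (hP : ∀ x y : X, ⟪P x, y⟫ = ⟪x, P y⟫)
    (hdiss : ∀ x : X, ⟪A x, P (H x)⟫ + ⟪H x, P (A x)⟫ ≤ 0)
    (x x' : ℝ → X)
    (hderiv : ∀ t : ℝ, 0 ≤ t → HasDerivAt x (x' t) t)
    (hPIE : ∀ t : ℝ, 0 ≤ t → H (x' t) = A (x t)) :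
    AntitoneOn (fun t => ⟪H (x t), P (H (x t))⟫) (Ici (0:ℝ)) :=
  pie_lyapunov_nonincreasing_general H A P hdiss x x' hderiv hPIE
end

section
/- Let X be a real Hilbert space and let H, A, P : X → X be bounded linear operators with P self-adjoint and coercive, i.e. there exists ε > 0 with ⟨z, P z⟩ ≥ ε ‖z‖² for all z ∈ X, and suppose ⟨A x, P (H x)⟩ + ⟨H x, P (A x)⟩ ≤ 0 for all x ∈ X. Let x : ℝ → X be differentiable with H (x'(t)) = A (x(t)) for all t ≥ 0. Then for all t ≥ 0, ‖H (x(t))‖² ≤ (‖P‖ / ε) ‖H (x(0))‖². -/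
open Set
open scoped RealInnerProductSpace

/-- Stability bound for a PIE `H ẋ(t) = A x(t)`: if `P` is self-adjoint and coercive
(`⟨z, Pz⟩ ≥ ε‖z‖²`) and `⟨Ax, P(Hx)⟩ + ⟨Hx, P(Ax)⟩ ≤ 0` for all `x`
(i.e. `A*PH + H*PA ≼ 0`), then `‖H x(t)‖² ≤ (‖P‖/ε) ‖H x(0)‖²` for all `t ≥ 0`. -/
theorem pie_stability_bound {X : Type*} [NormedAddCommGroup X]
    [InnerProductSpace ℝ X] [CompleteSpace X]
    (H A P : X →L[ℝ] X)
    (hP : ∀ x y : X, ⟪P x, y⟫ = ⟪x, P y⟫)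
    (ε : ℝ) (hε : 0 < ε)
    (hcoercive : ∀ z : X, ε * ‖z‖ ^ 2 ≤ ⟪z, P z⟫)
    (hdiss : ∀ x : X, ⟪A x, P (H x)⟫ + ⟪H x, P (A x)⟫ ≤ 0)
    (x x' : ℝ → X)
    (hderiv : ∀ t : ℝ, 0 ≤ t → HasDerivAt x (x' t) t)
    (hPIE : ∀ t : ℝ, 0 ≤ t → H (x' t) = A (x t)) :
    ∀ t : ℝ, 0 ≤ t → ‖H (x t)‖ ^ 2 ≤ (‖P‖ / ε) * ‖H (x 0)‖ ^ 2 := by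
  set V : ℝ → ℝ := fun t => ⟪H (x t), P (H (x t))⟫ with hVdef
  have hVderiv : ∀ t : ℝ, 0 ≤ t →
      HasDerivAt V (⟪A (x t), P (H (x t))⟫ + ⟪H (x t), P (A (x t))⟫) t := by
    intro t ht
    have h1 : HasDerivAt (fun t => H (x t)) (H (x' t)) t :=
      H.hasFDerivAt.comp_hasDerivAt t (hderiv t ht)
    have h2 : HasDerivAt (fun t => P (H (x t))) (P (H (x' t))) t :=
      P.hasFDerivAt.comp_hasDerivAt t h1
    have := h1.inner (𝕜 := ℝ) h2
    rw [hPIE t ht] at this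
    simpa [hVdef, add_comm] using this
  have hanti : AntitoneOn V (Ici (0 : ℝ)) := by
    apply antitoneOn_of_deriv_nonpos (convex_Ici 0)
    · exact fun t ht => ((hVderiv t ht).continuousAt).continuousWithinAt
    · intro t ht
      rw [interior_Ici] at ht
      exact ((hVderiv t ht.le).differentiableAt).differentiableWithinAt
    · intro t ht
      rw [interior_Ici] at ht
      rw [(hVderiv t ht.le).deriv]
      exact hdiss (x t)
  intro t ht
  have hVt : V t ≤ V 0 := hanti (self_mem_Ici) ht ht
  have h1 : ε * ‖H (x t)‖ ^ 2 ≤ V t := hcoercive (H (x t))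
  have h2 : V 0 ≤ ‖P‖ * ‖H (x 0)‖ ^ 2 := by
    calc V 0 ≤ ‖H (x 0)‖ * ‖P (H (x 0))‖ := real_inner_le_norm _ _
      _ ≤ ‖H (x 0)‖ * (‖P‖ * ‖H (x 0)‖) := by
          exact mul_le_mul_of_nonneg_left (P.le_opNorm _) (norm_nonneg _)
      _ = ‖P‖ * ‖H (x 0)‖ ^ 2 := by ring
  rw [div_mul_eq_mul_div, le_div_iff₀ hε]
  calc ‖H (x t)‖ ^ 2 * ε = ε * ‖H (x t)‖ ^ 2 := by ring
    _ ≤ V 0 := h1.trans hVt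
    _ ≤ ‖P‖ * ‖H (x 0)‖ ^ 2 := h2
end
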